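/- arXiv:2503.20457 — 2 statements merged into one kernel-verified Lean document; each statement's English description precedes it below -/
import Mathlib

section
/- Under the hypotheses of the preceding statement and additionally div(ρF) = 0 (μ-a.e.), each U(t) is a linear isometry on L²(P), the probability measure P is invariant under the flow φ_t for every t ∈ ℝ (P = P∘φ_t⁻¹), and U(t)x = x∘φ_t for all x ∈ L²(P) and t ∈ ℝ. -/
/-!
Pairing the generator with the constant function `1` turns `div (ρ F) = 0` into
`⟪A x, 1⟫ = 0`, so `t ↦ ∫ U(t) x dP` is constant on the domain of the generator.
Since `U(t) g = g ∘ φ_t` for `g ∈ C¹_c`, this gives `∫ g ∘ φ_t dP = ∫ g dP`, and smooth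
compactly supported functions determine a finite measure, so `P` is `φ_t`-invariant
(the flow of a Lipschitz field is Lipschitz, hence measurable). The Koopman operator
`x ↦ x ∘ φ_t` is then an isometry of `L²(P)` agreeing with `U(t)` on the dense set of
smooth compactly supported functions, hence everywhere.
-/

open MeasureTheory Filter Topology

noncomputable section

/-- The probability measure dP = ρ dμ on ℝⁿ. -/
def Pmeas {n : ℕ} (ρ : EuclideanSpace ℝ (Fin n) → ℝ) : Measure (EuclideanSpace ℝ (Fin n)) :=
  volume.withDensity fun x => ENNReal.ofReal (ρ x)

/-- A strongly continuous group of bounded operators on a real Banach space. -/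
def IsC0GroupR {E : Type*} [NormedAddCommGroup E] [NormedSpace ℝ E]
    (G : ℝ → E →L[ℝ] E) : Prop :=
  G 0 = 1 ∧ (∀ s t : ℝ, G (s + t) = (G s).comp (G t)) ∧ ∀ x : E, Continuous fun t => G t x

/-- `A` is the generator of the strongly continuous group `U`. -/
def IsGeneratorR {E : Type*} [NormedAddCommGroup E] [NormedSpace ℝ E]
    (U : ℝ → E →L[ℝ] E) (A : E →ₗ.[ℝ] E) : Prop :=
  ∀ x y : E, (∃ hx : x ∈ A.domain, A ⟨x, hx⟩ = y) ↔
    Tendsto (fun h : ℝ => h⁻¹ • (U h x - x)) (𝓝[≠] 0) (𝓝 y)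

open scoped ContDiff

section Flow

variable {E : Type*} [NormedAddCommGroup E] [NormedSpace ℝ E] {v : E → E} {K : NNReal}
  {φ : ℝ → E → E}

theorem dist_flow_le_of_nonneg (hv : LipschitzWith K v) (hφ0 : φ 0 = id)
    (hφd : ∀ x t, HasDerivAt (fun s => φ s x) (v (φ t x)) t) (x y : E) {t : ℝ} (ht : 0 ≤ t) :
    dist (φ t x) (φ t y) ≤ dist x y * Real.exp (K * t) := by
  have hcont : ∀ z, Continuous fun s => φ s z := fun z =>
    continuous_iff_continuousAt.mpr fun s => (hφd z s).continuousAt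
  simpa using dist_le_of_trajectories_ODE (fun _ => hv) (hcont x).continuousOn
    (fun s _ => (hφd x s).hasDerivWithinAt) (hcont y).continuousOn
    (fun s _ => (hφd y s).hasDerivWithinAt) (by simp [hφ0]) t ⟨ht, le_rfl⟩

theorem lipschitzWith_flow (hv : LipschitzWith K v) (hφ0 : φ 0 = id)
    (hφd : ∀ x t, HasDerivAt (fun s => φ s x) (v (φ t x)) t) (t : ℝ) :
    LipschitzWith ⟨Real.exp (K * |t|), (Real.exp_pos _).le⟩ (φ t) := by
  refine LipschitzWith.of_dist_le_mul fun x y => ?_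
  change dist _ _ ≤ Real.exp (K * |t|) * dist x y
  rw [mul_comm]
  rcases le_total 0 t with ht | ht
  · simpa [abs_of_nonneg ht] using dist_flow_le_of_nonneg hv hφ0 hφd x y ht
  · -- the time-reversed family `s ↦ φ (-s)` is the flow of `-v`
    have hψd : ∀ x s, HasDerivAt (fun r => φ (-r) x) (-v (φ (-s) x)) s := fun x s => by
      simpa [Function.comp_def] using (hφd x (-s)).scomp s (hasDerivAt_neg s)
    simpa [abs_of_nonpos ht] using
      dist_flow_le_of_nonneg (φ := fun s => φ (-s)) hv.neg (by simpa using hφ0) hψd x y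
        (neg_nonneg.mpr ht)

end Flow

theorem LinearPMap.closure_apply_mem {R E F : Type*} [CommRing R] [AddCommGroup E] [Module R E]
    [AddCommGroup F] [Module R F] [TopologicalSpace E] [TopologicalSpace F]
    [ContinuousAdd E] [ContinuousAdd F] [TopologicalSpace R] [ContinuousSMul R E]
    [ContinuousSMul R F] {f : E →ₗ.[R] F} {S : Set F} (hS : _root_.IsClosed S)
    (hf : ∀ x : f.domain, f x ∈ S) (x : f.closure.domain) : f.closure x ∈ S := by
  have hgraph : f.closure.graph ≤ f.graph.topologicalClosure := by
    by_cases hc : f.IsClosable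
    · exact hc.graph_closure_eq_closure_graph.ge
    · exact (f.closure_def' hc).symm ▸ f.graph.le_topologicalClosure
  have hsub : (f.graph : Set (E × F)) ⊆ Set.univ ×ˢ S := fun p hp => by
    obtain ⟨y, -, hy⟩ := f.mem_graph_iff.mp hp
    exact ⟨trivial, hy ▸ hf y⟩
  exact (closure_minimal hsub (isClosed_univ.prod hS) (hgraph (f.closure.mem_graph x))).2

section Generator

variable {E : Type*} [NormedAddCommGroup E] [NormedSpace ℝ E] {U : ℝ → E →L[ℝ] E}
  {A : E →ₗ.[ℝ] E}

theorem IsC0GroupR.apply_comm (hU : IsC0GroupR U) (s t : ℝ) (x : E) :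
    U s (U t x) = U t (U s x) := by
  rw [← ContinuousLinearMap.comp_apply, ← hU.2.1, add_comm, hU.2.1,
    ContinuousLinearMap.comp_apply]

namespace IsGeneratorR

theorem apply_mem_domain (hU : IsC0GroupR U) (hA : IsGeneratorR U A) {z : E}
    (hz : z ∈ A.domain) (s : ℝ) : ∃ h : U s z ∈ A.domain, A ⟨U s z, h⟩ = U s (A ⟨z, hz⟩) := by
  refine (hA _ _).mpr ?_
  have hslope : (fun h : ℝ => h⁻¹ • (U h (U s z) - U s z)) =
      fun h => U s (h⁻¹ • (U h z - z)) := by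
    ext1 h
    rw [hU.apply_comm, map_smul, map_sub]
  rw [hslope]
  exact ((U s).continuous.tendsto _).comp ((hA z _).mp ⟨hz, rfl⟩)

theorem hasDerivAt (hU : IsC0GroupR U) (hA : IsGeneratorR U A) {z : E} (hz : z ∈ A.domain)
    (s : ℝ) : HasDerivAt (fun r => U r z) (U s (A ⟨z, hz⟩)) s := by
  rw [hasDerivAt_iff_tendsto_slope_zero]
  have hslope : (fun h : ℝ => h⁻¹ • (U (s + h) z - U s z)) =
      fun h => U s (h⁻¹ • (U h z - z)) := by
    ext1 h
    rw [hU.2.1, ContinuousLinearMap.comp_apply, map_smul, map_sub]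
  rw [hslope]
  exact ((U s).continuous.tendsto _).comp ((hA z _).mp ⟨hz, rfl⟩)

/-- The derivative of `t ↦ ℓ (U t z)` is `ℓ (A (U t z)) = 0`. -/
theorem apply_eq_of_forall_apply_eq_zero (hU : IsC0GroupR U) (hA : IsGeneratorR U A)
    {ℓ : E →L[ℝ] ℝ} (hℓ : ∀ x : A.domain, ℓ (A x) = 0) {z : E} (hz : z ∈ A.domain) (t : ℝ) :
    ℓ (U t z) = ℓ z := by
  have hderiv : ∀ s, HasDerivAt (fun r => ℓ (U r z)) 0 s := fun s => by
    obtain ⟨hsz, hAsz⟩ := hA.apply_mem_domain hU hz s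
    simpa [Function.comp_def, ← hAsz, hℓ] using
      ℓ.hasFDerivAt.comp_hasDerivAt s (hA.hasDerivAt hU hz s)
  simpa [hU.1] using is_const_of_deriv_eq_zero (fun s => (hderiv s).differentiableAt)
    (fun s => (hderiv s).deriv) t 0

end IsGeneratorR

end Generator

theorem MeasureTheory.dist_integral_le_of_forall_dist_le {α : Type*} [MeasurableSpace α]
    {μ : Measure α} [IsFiniteMeasure μ] {f g : α → ℝ} (hf : Integrable f μ)
    (hg : Integrable g μ) {ε : ℝ} (h : ∀ x, dist (f x) (g x) ≤ ε) :
    dist (∫ x, f x ∂μ) (∫ x, g x ∂μ) ≤ ε * μ.real Set.univ := by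
  rw [dist_eq_norm, ← integral_sub hf hg]
  exact norm_integral_le_of_norm_le_const
    (ae_of_all _ fun x => (dist_eq_norm _ _).symm.trans_le (h x))

theorem MeasureTheory.Measure.ext_of_integral_eq_of_contDiff {E : Type*} [NormedAddCommGroup E]
    [NormedSpace ℝ E] [FiniteDimensional ℝ E] [MeasurableSpace E] [BorelSpace E]
    {μ ν : Measure E} [IsFiniteMeasure μ] [IsFiniteMeasure ν]
    (h : ∀ g : E → ℝ, ContDiff ℝ ∞ g → HasCompactSupport g → ∫ x, g x ∂μ = ∫ x, g x ∂ν) :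
    μ = ν := by
  refine Measure.ext_of_integral_eq_on_compactlySupported fun f =>
    eq_of_forall_dist_le fun δ hδ => ?_
  set c := μ.real Set.univ + ν.real Set.univ
  obtain ⟨g, hg, hgf, hsupp⟩ := f.continuous.exists_contDiff_approx ⊤ (ε := fun _ => δ / (c + 1))
    continuous_const fun _ => by positivity
  have hgc : HasCompactSupport g := f.hasCompactSupport.mono hsupp
  have hfg : ∀ x, dist (f x) (g x) ≤ δ / (c + 1) := fun x => by rw [dist_comm]; exact (hgf x).le
  have hgf' : ∀ x, dist (g x) (f x) ≤ δ / (c + 1) := fun x => (hgf x).le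
  calc dist (∫ x, f x ∂μ) (∫ x, f x ∂ν)
      ≤ dist (∫ x, f x ∂μ) (∫ x, g x ∂μ) + dist (∫ x, g x ∂ν) (∫ x, f x ∂ν) := by
        rw [h g hg hgc]; exact dist_triangle _ _ _
    _ ≤ δ / (c + 1) * μ.real Set.univ + δ / (c + 1) * ν.real Set.univ :=
        add_le_add (dist_integral_le_of_forall_dist_le f.integrable
          (hg.continuous.integrable_of_hasCompactSupport hgc) hfg)
          (dist_integral_le_of_forall_dist_le
          (hg.continuous.integrable_of_hasCompactSupport hgc) f.integrable hgf')
    _ = δ * (c / (c + 1)) := by ring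
    _ ≤ δ := mul_le_of_le_one_right hδ.le ((div_le_one (by positivity)).mpr (by linarith))

theorem MeasureTheory.Lp.apply_eq_compMeasurePreserving_of_contDiff {E F : Type*}
    [NormedAddCommGroup E] [NormedSpace ℝ E] [FiniteDimensional ℝ E] [MeasurableSpace E]
    [BorelSpace E] [NormedAddCommGroup F] [NormedSpace ℝ F] {μ : Measure E}
    [IsFiniteMeasureOnCompacts μ] {p : ENNReal} [Fact (1 ≤ p)] (hp : p ≠ ⊤) {f : E → E}
    (hf : MeasurePreserving f μ μ) {T : Lp F p μ →L[ℝ] Lp F p μ}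
    (hT : ∀ (x : Lp F p μ) (g : E → F), ContDiff ℝ ∞ g → HasCompactSupport g → x =ᵐ[μ] g →
      T x =ᵐ[μ] g ∘ f)
    (x : Lp F p μ) : T x = Lp.compMeasurePreserving f hf x := by
  refine congrFun (Continuous.ext_on (Lp.dense_hasCompactSupport_contDiff (μ := μ) (F := F) hp)
    T.continuous (Lp.isometry_compMeasurePreserving hf).continuous ?_) x
  rintro y ⟨g, hyg, hgc, hg⟩
  refine Lp.ext ((hT y g hg hgc hyg).trans ?_)
  filter_upwards [Lp.coeFn_compMeasurePreserving y hf,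
    hf.quasiMeasurePreserving.ae_eq_comp hyg] with a h₁ h₂
  rw [h₁, Function.comp_apply, h₂, Function.comp_apply]

theorem integral_comp_eq_of_isGenerator {E : Type*} [NormedAddCommGroup E] [NormedSpace ℝ E]
    [MeasurableSpace E] [OpensMeasurableSpace E] {μ : Measure E} [IsFiniteMeasure μ]
    {F : E → E} (hF : Continuous F) {φ : ℝ → E → E} {A : Lp ℝ 2 μ →ₗ.[ℝ] Lp ℝ 2 μ}
    (hA : ∀ x y : Lp ℝ 2 μ, (∃ hx : x ∈ A.domain, A ⟨x, hx⟩ = y) ↔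
      ∃ g : E → ℝ, ContDiff ℝ 1 g ∧ HasCompactSupport g ∧ x =ᵐ[μ] g ∧
        y =ᵐ[μ] fun a => fderiv ℝ g a (F a))
    {U : ℝ → Lp ℝ 2 μ →L[ℝ] Lp ℝ 2 μ} (hU : IsC0GroupR U) (hUA : IsGeneratorR U A.closure)
    (hUφ : ∀ (x : Lp ℝ 2 μ) (g : E → ℝ), ContDiff ℝ 1 g → HasCompactSupport g → x =ᵐ[μ] g →
      ∀ t, U t x =ᵐ[μ] fun a => g (φ t a))
    (hdiv : ∀ g : E → ℝ, ContDiff ℝ 1 g → HasCompactSupport g →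
      ∫ a, fderiv ℝ g a (F a) ∂μ = 0)
    {g : E → ℝ} (hg : ContDiff ℝ 1 g) (hgc : HasCompactSupport g) (t : ℝ) :
    ∫ a, g (φ t a) ∂μ = ∫ a, g a ∂μ := by
  set ℓ := innerSL ℝ (indicatorConstLp 2 MeasurableSet.univ (measure_ne_top μ _) (1 : ℝ))
  have hℓ : ∀ x : Lp ℝ 2 μ, ℓ x = ∫ a, x a ∂μ := fun x => by
    rw [innerSL_apply_apply, L2.inner_indicatorConstLp_one, Measure.restrict_univ]
  have hℓA : ∀ x : A.closure.domain, ℓ (A.closure x) = 0 :=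
    A.closure_apply_mem (S := {y | ℓ y = 0}) (isClosed_eq ℓ.continuous continuous_const)
      fun x => by
        obtain ⟨g, hg, hgc, -, hy⟩ := (hA x (A x)).mp ⟨x.2, rfl⟩
        rw [Set.mem_ofPred_eq, hℓ, integral_congr_ae hy, hdiv g hg hgc]
  have hgL : MemLp g 2 μ := hg.continuous.memLp_of_hasCompactSupport hgc
  have hDgL : MemLp (fun a => fderiv ℝ g a (F a)) 2 μ :=
    ((hg.continuous_fderiv one_ne_zero).clm_apply hF).memLp_of_hasCompactSupport
      ((hgc.fderiv (𝕜 := ℝ)).mono fun a ha h0 => ha (by simp [h0]))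
  obtain ⟨hgA, -⟩ := (hA hgL.toLp hDgL.toLp).mpr ⟨g, hg, hgc, hgL.coeFn_toLp, hDgL.coeFn_toLp⟩
  have h := hUA.apply_eq_of_forall_apply_eq_zero hU hℓA (A.le_closure.1 hgA) t
  rwa [hℓ, hℓ, integral_congr_ae (hUφ _ g hg hgc hgL.coeFn_toLp t),
    integral_congr_ae hgL.coeFn_toLp] at h

section Pmeas

variable {n : ℕ} {ρ : EuclideanSpace ℝ (Fin n) → ℝ}

theorem isProbabilityMeasure_Pmeas (hρ0 : ∀ x, 0 ≤ ρ x) (hρi : Integrable ρ)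
    (hρ1 : ∫ x, ρ x = 1) : IsProbabilityMeasure (Pmeas ρ) := by
  constructor
  rw [Pmeas, withDensity_apply _ MeasurableSet.univ, Measure.restrict_univ,
    ← ofReal_integral_eq_lintegral_ofReal hρi (ae_of_all _ hρ0), hρ1, ENNReal.ofReal_one]

theorem integral_Pmeas (hρ0 : ∀ x, 0 ≤ ρ x) (hρ : AEMeasurable ρ)
    (h : EuclideanSpace ℝ (Fin n) → ℝ) : ∫ a, h a ∂Pmeas ρ = ∫ a, ρ a * h a := by
  change ∫ a, h a ∂volume.withDensity (fun x => ((ρ x).toNNReal : ENNReal)) = _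
  rw [integral_withDensity_eq_integral_smul₀
    (by exact measurable_real_toNNReal.comp_aemeasurable hρ)]
  simp_rw [NNReal.smul_def, smul_eq_mul, Real.coe_toNNReal _ (hρ0 _)]

theorem integral_fderiv_apply_Pmeas_eq_zero (hρ0 : ∀ x, 0 ≤ ρ x) (hρ : AEMeasurable ρ)
    {F : EuclideanSpace ℝ (Fin n) → EuclideanSpace ℝ (Fin n)}
    {dvg : EuclideanSpace ℝ (Fin n) → ℝ}
    (hdvg : ∀ φ : EuclideanSpace ℝ (Fin n) → ℝ, ContDiff ℝ 1 φ → HasCompactSupport φ →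
      ∫ x, ρ x * fderiv ℝ φ x (F x) = -∫ x, dvg x * φ x)
    (hdvg0 : dvg =ᵐ[volume] 0) {g : EuclideanSpace ℝ (Fin n) → ℝ} (hg : ContDiff ℝ 1 g)
    (hgc : HasCompactSupport g) : ∫ a, fderiv ℝ g a (F a) ∂Pmeas ρ = 0 := by
  rw [integral_Pmeas hρ0 hρ, hdvg g hg hgc, neg_eq_zero]
  exact integral_eq_zero_of_ae (hdvg0.mono fun a ha => by simp [ha])

end Pmeas

theorem koopman_group_unitary_general {n : ℕ}
    (ρ : EuclideanSpace ℝ (Fin n) → ℝ)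
    (hρ0 : ∀ x, 0 ≤ ρ x) (hρi : Integrable ρ) (hρ1 : ∫ x, ρ x = 1)
    (F : EuclideanSpace ℝ (Fin n) → EuclideanSpace ℝ (Fin n))
    (hF : ContDiff ℝ 1 F) (C : ℝ) (hFb : ∀ x, ‖fderiv ℝ F x‖ ≤ C)
    (dvg : EuclideanSpace ℝ (Fin n) → ℝ)
    (hdvg : ∀ φ : EuclideanSpace ℝ (Fin n) → ℝ, ContDiff ℝ 1 φ → HasCompactSupport φ →
      ∫ x, ρ x * fderiv ℝ φ x (F x) = -∫ x, dvg x * φ x)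
    -- div(ρF) = 0 μ-a.e.:
    (hdvg0 : dvg =ᵐ[volume] 0)
    (φf : ℝ → EuclideanSpace ℝ (Fin n) → EuclideanSpace ℝ (Fin n))
    (hφ0 : φf 0 = id)
    (hφd : ∀ x t, HasDerivAt (fun s => φf s x) (F (φf t x)) t)
    (Aop : Lp ℝ 2 (Pmeas ρ) →ₗ.[ℝ] Lp ℝ 2 (Pmeas ρ))
    (hAop : ∀ x y : Lp ℝ 2 (Pmeas ρ), (∃ hx : x ∈ Aop.domain, Aop ⟨x, hx⟩ = y) ↔
      ∃ g : EuclideanSpace ℝ (Fin n) → ℝ, ContDiff ℝ 1 g ∧ HasCompactSupport g ∧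
        (x : EuclideanSpace ℝ (Fin n) → ℝ) =ᵐ[Pmeas ρ] g ∧
        (y : EuclideanSpace ℝ (Fin n) → ℝ) =ᵐ[Pmeas ρ] fun a => fderiv ℝ g a (F a))
    -- U is the strongly continuous group generated by the closure of (F·∇, C¹_c):
    (U : ℝ → Lp ℝ 2 (Pmeas ρ) →L[ℝ] Lp ℝ 2 (Pmeas ρ))
    (hU : IsC0GroupR U) (hUgen : IsGeneratorR U Aop.closure)
    (hUK : ∀ (x : Lp ℝ 2 (Pmeas ρ)) (g : EuclideanSpace ℝ (Fin n) → ℝ),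
        ContDiff ℝ 1 g → HasCompactSupport g →
        (x : EuclideanSpace ℝ (Fin n) → ℝ) =ᵐ[Pmeas ρ] g →
        ∀ t : ℝ, (U t x : EuclideanSpace ℝ (Fin n) → ℝ) =ᵐ[Pmeas ρ] fun a => g (φf t a)) :
    (∀ (t : ℝ) (x : Lp ℝ 2 (Pmeas ρ)), ‖U t x‖ = ‖x‖) ∧
    (∀ t : ℝ, (Pmeas ρ).map (φf t) = Pmeas ρ) ∧
    (∀ (t : ℝ) (x : Lp ℝ 2 (Pmeas ρ)),
      (U t x : EuclideanSpace ℝ (Fin n) → ℝ) =ᵐ[Pmeas ρ]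
        fun a => (x : EuclideanSpace ℝ (Fin n) → ℝ) (φf t a)) := by
  have := isProbabilityMeasure_Pmeas hρ0 hρi hρ1
  have hFlip : LipschitzWith C.toNNReal F :=
    lipschitzWith_of_nnnorm_fderiv_le (hF.differentiable one_ne_zero) fun x => by
      rw [← NNReal.coe_le_coe, coe_nnnorm]
      exact (hFb x).trans (Real.le_coe_toNNReal C)
  have hφ : ∀ t, MeasurePreserving (φf t) (Pmeas ρ) (Pmeas ρ) := fun t => by
    have hφm := (lipschitzWith_flow hFlip hφ0 hφd t).continuous.measurable
    refine ⟨hφm, Measure.ext_of_integral_eq_of_contDiff fun g hg hgc => ?_⟩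
    rw [integral_map hφm.aemeasurable hg.continuous.aestronglyMeasurable]
    exact integral_comp_eq_of_isGenerator hF.continuous hAop hU hUgen hUK
      (fun g => integral_fderiv_apply_Pmeas_eq_zero hρ0 hρi.aemeasurable hdvg hdvg0)
      (hg.of_le (by norm_num)) hgc t
  have hK : ∀ t x, U t x = Lp.compMeasurePreserving (φf t) (hφ t) x := fun t =>
    Lp.apply_eq_compMeasurePreserving_of_contDiff ENNReal.ofNat_ne_top (hφ t)
      fun x g hg hgc hxg => hUK x g (hg.of_le (by norm_num)) hgc hxg t
  refine ⟨fun t x => ?_, fun t => (hφ t).map_eq, fun t x => ?_⟩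
  · rw [hK, Lp.norm_compMeasurePreserving]
  · rw [hK]
    exact Lp.coeFn_compMeasurePreserving x (hφ t)

/-- if additionally div(ρF) = 0, each U(t) is an isometry on L²(P),
the measure P is invariant under the flow, and U(t) is the Koopman operator
x ↦ x∘φ_t on all of L²(P). -/
theorem koopman_group_unitary {n : ℕ}
    (ρ : EuclideanSpace ℝ (Fin n) → ℝ)
    (hρ0 : ∀ x, 0 ≤ ρ x) (hρi : Integrable ρ) (hρ1 : ∫ x, ρ x = 1)
    (F : EuclideanSpace ℝ (Fin n) → EuclideanSpace ℝ (Fin n))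
    (hF : ContDiff ℝ 1 F) (C : ℝ) (hFb : ∀ x, ‖fderiv ℝ F x‖ ≤ C)
    (dvg : EuclideanSpace ℝ (Fin n) → ℝ) (hdvgi : Integrable dvg)
    (hdvg : ∀ φ : EuclideanSpace ℝ (Fin n) → ℝ, ContDiff ℝ 1 φ → HasCompactSupport φ →
      ∫ x, ρ x * fderiv ℝ φ x (F x) = -∫ x, dvg x * φ x)
    -- div(ρF) = 0 μ-a.e.:
    (hdvg0 : dvg =ᵐ[volume] 0)
    (φf : ℝ → EuclideanSpace ℝ (Fin n) → EuclideanSpace ℝ (Fin n))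
    (hφ0 : φf 0 = id) (hφg : ∀ s t : ℝ, φf (s + t) = φf s ∘ φf t)
    (hφd : ∀ x t, HasDerivAt (fun s => φf s x) (F (φf t x)) t)
    (Aop : Lp ℝ 2 (Pmeas ρ) →ₗ.[ℝ] Lp ℝ 2 (Pmeas ρ))
    (hAop : ∀ x y : Lp ℝ 2 (Pmeas ρ), (∃ hx : x ∈ Aop.domain, Aop ⟨x, hx⟩ = y) ↔
      ∃ g : EuclideanSpace ℝ (Fin n) → ℝ, ContDiff ℝ 1 g ∧ HasCompactSupport g ∧
        (x : EuclideanSpace ℝ (Fin n) → ℝ) =ᵐ[Pmeas ρ] g ∧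
        (y : EuclideanSpace ℝ (Fin n) → ℝ) =ᵐ[Pmeas ρ] fun a => fderiv ℝ g a (F a))
    -- U is the strongly continuous group generated by the closure of (F·∇, C¹_c):
    (U : ℝ → Lp ℝ 2 (Pmeas ρ) →L[ℝ] Lp ℝ 2 (Pmeas ρ))
    (hU : IsC0GroupR U) (hUgen : IsGeneratorR U Aop.closure)
    (hUK : ∀ (x : Lp ℝ 2 (Pmeas ρ)) (g : EuclideanSpace ℝ (Fin n) → ℝ),
        ContDiff ℝ 1 g → HasCompactSupport g →
        (x : EuclideanSpace ℝ (Fin n) → ℝ) =ᵐ[Pmeas ρ] g →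
        ∀ t : ℝ, (U t x : EuclideanSpace ℝ (Fin n) → ℝ) =ᵐ[Pmeas ρ] fun a => g (φf t a)) :
    (∀ (t : ℝ) (x : Lp ℝ 2 (Pmeas ρ)), ‖U t x‖ = ‖x‖) ∧
    (∀ t : ℝ, (Pmeas ρ).map (φf t) = Pmeas ρ) ∧
    (∀ (t : ℝ) (x : Lp ℝ 2 (Pmeas ρ)),
      (U t x : EuclideanSpace ℝ (Fin n) → ℝ) =ᵐ[Pmeas ρ]
        fun a => (x : EuclideanSpace ℝ (Fin n) → ℝ) (φf t a)) :=
  koopman_group_unitary_general ρ hρ0 hρi hρ1 F hF C hFb dvg hdvg hdvg0 φf hφ0 hφd Aop hAop U hU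
    hUgen hUK

end
end

section
/- Non-stationary GLE uniqueness: let {U(t,s)}_{t,s∈ℝ} be a strongly continuous family of bounded operators on a complex Hilbert space H satisfying U(t,t) = 1 and the reversed composition law U(r,s)U(t,r) = U(t,s); let L(t)x := lim_{h→0} h⁻¹[U(t+h,t)x − x], fix t₀ ∈ ℝ and 0 ≠ z with z ∈ D(L(t)) for all t, such that t ↦ U(t,t₀)L(t)z is continuous. Define the time-dependent inner product (x,y)_t := (U(t,t₀)x, U(t,t₀)y) and the projection P(t)x := (x,z)_t (z,z)_t⁻¹ z, Q(t) = 1 − P(t). Then the system (d/dt) U(t,t₀)z = U(t,t₀)P(t)L(t)z + U(s,t₀)η_{ts} + ∫_s^t K(t,r) U(r,t₀)z dr together with K(t,s) = −(η_{ts}, η_{ss})_s (z,z)_s⁻¹ has a unique solution (K, η): for fixed t, K(t,·) is the unique continuous solution of the Volterra equation K(t,s) = −(U(t,s)Q(t)L(t)z, Q(s)L(s)z)_s (z,z)_s⁻¹ + ∫_s^t K(t,r)(U(r,s)z, Q(s)L(s)z)_s (z,z)_s⁻¹ dr, and η_{ts} = U(t,s)Q(t)L(t)z − ∫_s^t K(t,r)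 U(r,s)z dr. -/
/-! Since `r ↦ U(r,t₀)z` has derivative `U(t,t₀)L(t)z` and `U(s,t₀)` is injective (its left
inverse is `U(t₀,s)`), `P(t) + Q(t) = 1` turns the GLE into the explicit formula for `η`.
Substituting that formula into the fluctuation–dissipation relation turns it into a linear
Volterra equation for `K(t,·)`. If `M` bounds its kernel on `[t - N, t + N]`, the `n`-th iterate
of the Volterra map there is `(MN)ⁿ/n!`-Lipschitz, so some iterate is a contraction. The same
factorial bound makes the local solutions agree, so they glue to a continuous solution on `ℝ`. -/

open MeasureTheory Filter Topology
open scoped InnerProductSpace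

noncomputable section

variable {H : Type} [NormedAddCommGroup H] [InnerProductSpace ℂ H] [CompleteSpace H]

/-- The time-dependent Mori projection `P(t) x = (x,z)_t (z,z)_t⁻¹ z`, where
`(x,y)_t = (U(t,t₀)x, U(t,t₀)y)` (conjugate-linear in the second slot, i.e.
`⟪U(t,t₀)y, U(t,t₀)x⟫` in Mathlib's convention). -/
def nsP (U : ℝ → ℝ → H →L[ℂ] H) (t₀ : ℝ) (z : H) (t : ℝ) (x : H) : H :=
  (⟪U t t₀ z, U t t₀ x⟫_ℂ / ⟪U t t₀ z, U t t₀ z⟫_ℂ) • z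

def nsQ (U : ℝ → ℝ → H →L[ℂ] H) (t₀ : ℝ) (z : H) (t : ℝ) (x : H) : H :=
  x - nsP U t₀ z t x

open Set Function
open scoped Nat Interval

section Volterra

variable {𝕜 : Type*} [RCLike 𝕜] {g : ℝ → 𝕜} {k : ℝ → ℝ → 𝕜} {t : ℝ}

def volterraMap (g : ℝ → 𝕜) (k : ℝ → ℝ → 𝕜) (t : ℝ) (F : ℝ → 𝕜) (s : ℝ) : 𝕜 :=
  g s + ∫ r in s..t, F r * k r s

theorem continuous_volterraMap (hg : Continuous g) (hk : Continuous (uncurry k)) {F : ℝ → 𝕜}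
    (hF : Continuous F) : Continuous (volterraMap g k t F) := by
  have hprim : Continuous fun s => ∫ r in t..s, F r * k r s :=
    intervalIntegral.continuous_parametric_intervalIntegral_of_continuous
      (f := fun s r => F r * k r s) (by fun_prop) continuous_id
  unfold volterraMap
  simp_rw [intervalIntegral.integral_symm t]
  exact hg.add hprim.neg

theorem norm_volterraMap_sub_le (hk : Continuous (uncurry k)) {F₁ F₂ : ℝ → 𝕜}
    (hF₁ : Continuous F₁) (hF₂ : Continuous F₂) {s B M : ℝ} {n : ℕ}
    (hF : ∀ r ∈ [[s, t]], ‖F₁ r - F₂ r‖ ≤ B * (M * |r - t|) ^ n / n !)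
    (hkM : ∀ r ∈ [[s, t]], ‖k r s‖ ≤ M) (hB : 0 ≤ B) :
    ‖volterraMap g k t F₁ s - volterraMap g k t F₂ s‖
      ≤ B * (M * |s - t|) ^ (n + 1) / (n + 1)! := by
  have hM : 0 ≤ M := (norm_nonneg _).trans (hkM s left_mem_uIcc)
  have hks : Continuous fun r => k r s := hk.uncurry_right s
  have hsub : volterraMap g k t F₁ s - volterraMap g k t F₂ s
      = ∫ r in s..t, (F₁ r - F₂ r) * k r s := by
    simp_rw [volterraMap, add_sub_add_left_eq_sub, sub_mul]
    exact (intervalIntegral.integral_sub ((hF₁.mul hks).intervalIntegrable _ _)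
      ((hF₂.mul hks).intervalIntegrable _ _)).symm
  have hbound : ∀ r ∈ Ι s t, ‖(F₁ r - F₂ r) * k r s‖ ≤ B * M ^ (n + 1) / n ! * |r - t| ^ n := by
    intro r hr
    rw [norm_mul]
    calc ‖F₁ r - F₂ r‖ * ‖k r s‖ ≤ B * (M * |r - t|) ^ n / n ! * M :=
          mul_le_mul (hF r (uIoc_subset_uIcc hr)) (hkM r (uIoc_subset_uIcc hr)) (norm_nonneg _)
            (by positivity)
      _ = B * M ^ (n + 1) / n ! * |r - t| ^ n := by ring
  rw [hsub, intervalIntegral.norm_intervalIntegral_eq]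
  refine (norm_integral_le_of_norm_le (Continuous.integrableOn_uIoc (by fun_prop))
    ((ae_restrict_mem measurableSet_uIoc).mono hbound)).trans_eq ?_
  rw [integral_const_mul, uIoc_comm, integral_pow_abs_sub_uIoc, Nat.factorial_succ]
  push_cast
  field_simp
  ring

theorem exists_bound_norm_kernel (hk : Continuous (uncurry k)) (N : ℝ) :
    ∃ M, ∀ s ∈ Icc (t - N) (t + N), ∀ r ∈ [[s, t]], ‖k r s‖ ≤ M := by
  obtain ⟨M, hM⟩ := (isCompact_Icc.prod isCompact_Icc).exists_bound_of_continuousOn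
    (hk.continuousOn (s := Icc (t - N) (t + N) ×ˢ Icc (t - N) (t + N)))
  refine ⟨M, fun s hs r hr => hM (r, s) ⟨uIcc_subset_Icc hs ?_ hr, hs⟩⟩
  exact ⟨by linarith [hs.1, hs.2], by linarith [hs.1, hs.2]⟩

theorem eqOn_of_eq_volterraMap (hk : Continuous (uncurry k)) {N : ℝ} {F₁ F₂ : ℝ → 𝕜}
    (hF₁ : Continuous F₁) (hF₂ : Continuous F₂)
    (h₁ : ∀ s ∈ Icc (t - N) (t + N), F₁ s = volterraMap g k t F₁ s)
    (h₂ : ∀ s ∈ Icc (t - N) (t + N), F₂ s = volterraMap g k t F₂ s) :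
    EqOn F₁ F₂ (Icc (t - N) (t + N)) := by
  obtain ⟨M, hM⟩ := exists_bound_norm_kernel hk (t := t) N
  obtain ⟨B, hB⟩ := isCompact_Icc.exists_bound_of_continuousOn
    ((hF₁.sub hF₂).continuousOn (s := Icc (t - N) (t + N)))
  have hiter : ∀ n : ℕ, ∀ s ∈ Icc (t - N) (t + N),
      ‖F₁ s - F₂ s‖ ≤ B * (M * |s - t|) ^ n / n ! := by
    intro n
    induction n with
    | zero => simpa using hB
    | succ n ih =>
      intro s hs
      have ht : t ∈ Icc (t - N) (t + N) := ⟨by linarith [hs.1, hs.2], by linarith [hs.1, hs.2]⟩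
      rw [h₁ s hs, h₂ s hs]
      exact norm_volterraMap_sub_le hk hF₁ hF₂ (fun r hr => ih r (uIcc_subset_Icc hs ht hr))
        (hM s hs) ((norm_nonneg _).trans (hB s hs))
  intro s hs
  have hlim : Tendsto (fun n : ℕ => B * ((M * |s - t|) ^ n / n !)) atTop (𝓝 (B * 0)) :=
    (FloorSemiring.tendsto_pow_div_factorial_atTop _).const_mul B
  have hle : ‖F₁ s - F₂ s‖ ≤ 0 := by
    rw [← mul_zero B]
    exact ge_of_tendsto' hlim fun n => (hiter n s hs).trans_eq (mul_div_assoc _ _ _)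
  exact sub_eq_zero.mp (norm_le_zero_iff.mp hle)

def volterraMapIcc (hg : Continuous g) (hk : Continuous (uncurry k)) {N : ℝ} (hN : 0 ≤ N)
    (f : C(Icc (t - N) (t + N), 𝕜)) : C(Icc (t - N) (t + N), 𝕜) :=
  ⟨(Icc (t - N) (t + N)).domRestrict (volterraMap g k t (IccExtend (by linarith) f)),
    (continuous_volterraMap hg hk (map_continuous f).Icc_extend').continuousOn.domRestrict⟩

theorem dist_iterate_volterraMapIcc_le (hg : Continuous g) (hk : Continuous (uncurry k))
    {N M : ℝ} (hN : 0 ≤ N) (hM : ∀ s ∈ Icc (t - N) (t + N), ∀ r ∈ [[s, t]], ‖k r s‖ ≤ M)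
    (f₁ f₂ : C(Icc (t - N) (t + N), 𝕜)) (n : ℕ) :
    dist ((volterraMapIcc hg hk hN)^[n] f₁) ((volterraMapIcc hg hk hN)^[n] f₂)
      ≤ (M * N) ^ n / n ! * dist f₁ f₂ := by
  set T := volterraMapIcc hg hk hN
  have hI : t ∈ Icc (t - N) (t + N) := ⟨by linarith, by linarith⟩
  have hpt : ∀ n : ℕ, ∀ s : Icc (t - N) (t + N),
      ‖(T^[n] f₁) s - (T^[n] f₂) s‖ ≤ dist f₁ f₂ * (M * |(s : ℝ) - t|) ^ n / n ! := by
    intro n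
    induction n with
    | zero => simpa [dist_eq_norm] using ContinuousMap.dist_apply_le_dist (f := f₁) (g := f₂)
    | succ n ih =>
      intro s
      rw [iterate_succ_apply', iterate_succ_apply']
      refine norm_volterraMap_sub_le hk (map_continuous _).Icc_extend'
        (map_continuous _).Icc_extend' (fun r hr => ?_) (hM s s.2) dist_nonneg
      have hr' := uIcc_subset_Icc s.2 hI hr
      rw [IccExtend_of_mem _ _ hr', IccExtend_of_mem _ _ hr']
      exact ih ⟨r, hr'⟩
  have hM0 : 0 ≤ M := (norm_nonneg _).trans (hM t hI t left_mem_uIcc)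
  refine (ContinuousMap.dist_le (by positivity)).mpr fun s => ?_
  rw [dist_eq_norm]
  refine (hpt n s).trans ?_
  rw [mul_comm (dist f₁ f₂), mul_div_right_comm]
  gcongr
  exact abs_sub_le_iff.mpr ⟨by linarith [s.2.2], by linarith [s.2.1]⟩

theorem exists_continuous_eq_volterraMap_on_Icc (hg : Continuous g) (hk : Continuous (uncurry k))
    {N : ℝ} (hN : 0 ≤ N) :
    ∃ F : ℝ → 𝕜, Continuous F ∧ ∀ s ∈ Icc (t - N) (t + N), F s = volterraMap g k t F s := by
  obtain ⟨M, hM⟩ := exists_bound_norm_kernel hk (t := t) N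
  obtain ⟨n, hn⟩ := (FloorSemiring.tendsto_pow_div_factorial_atTop (M * N)).eventually
    (gt_mem_nhds zero_lt_one) |>.exists
  have hc : 0 ≤ (M * N) ^ n / n ! := by
    have hM0 : 0 ≤ M := (norm_nonneg _).trans (hM t ⟨by linarith, by linarith⟩ t left_mem_uIcc)
    positivity
  have hcontr : ContractingWith ⟨_, hc⟩ (volterraMapIcc hg hk hN)^[n] :=
    ⟨hn, LipschitzWith.of_dist_le_mul (dist_iterate_volterraMapIcc_le hg hk hN hM · · n)⟩
  set f := ContractingWith.fixedPoint _ hcontr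
  have hf : volterraMapIcc hg hk hN f = f := hcontr.isFixedPt_fixedPoint_iterate
  refine ⟨IccExtend (by linarith) f, (map_continuous f).Icc_extend', fun s hs => ?_⟩
  rw [IccExtend_of_mem _ _ hs]
  exact (DFunLike.congr_fun hf ⟨s, hs⟩).symm

theorem exists_continuous_eq_volterraMap (hg : Continuous g) (hk : Continuous (uncurry k)) :
    ∃ F : ℝ → 𝕜, Continuous F ∧ ∀ s, F s = volterraMap g k t F s := by
  choose F hFc hF using fun n : ℕ =>
    exists_continuous_eq_volterraMap_on_Icc hg hk (t := t) n.cast_nonneg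
  have hagree : ∀ m n : ℕ, m ≤ n → EqOn (F m) (F n) (Icc (t - m) (t + m)) := by
    intro m n hmn
    have hsub : Icc (t - m) (t + m) ⊆ Icc (t - n) (t + n) := by
      apply Icc_subset_Icc <;> gcongr
    exact eqOn_of_eq_volterraMap hk (hFc m) (hFc n) (hF m) fun s hs => hF n s (hsub hs)
  set idx : ℝ → ℕ := fun s => ⌈|t - s|⌉₊
  have hidx : ∀ s, s ∈ Icc (t - idx s) (t + idx s) :=
    fun s => mem_Icc_iff_abs_le.mp (Nat.le_ceil _)
  have hF_idx : ∀ n : ℕ, ∀ s ∈ Icc (t - n) (t + n), F (idx s) s = F n s := by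
    intro n s hs
    rcases le_total (idx s) n with h | h
    · exact hagree _ _ h (hidx s)
    · exact (hagree _ _ h hs).symm
  refine ⟨fun s => F (idx s) s, continuous_iff_continuousAt.mpr fun s₀ => ?_, fun s => ?_⟩
  · have hnhds : Icc (t - ↑(idx s₀ + 1)) (t + ↑(idx s₀ + 1)) ∈ 𝓝 s₀ := by
      have := hidx s₀
      push_cast
      exact Icc_mem_nhds (by linarith [this.1]) (by linarith [this.2])
    exact (hFc _).continuousAt.congr
      (eventually_of_mem hnhds fun s hs => (hF_idx _ s hs).symm)
  · have ht : t ∈ Icc (t - idx s) (t + idx s) := ⟨by linarith [hidx s], by linarith [hidx s]⟩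
    change F (idx s) s = _
    rw [hF _ s (hidx s)]
    unfold volterraMap
    congr 1
    exact intervalIntegral.integral_congr fun r hr =>
      congrArg (· * k r s) (hF_idx _ r (uIcc_subset_Icc (hidx s) ht hr)).symm

end Volterra

section EvolutionFamily

variable {E : Type*} [NormedAddCommGroup E] [NormedSpace ℂ E] {U : ℝ → ℝ → E →L[ℂ] E}

theorem evolution_apply_apply (hcomp : ∀ r s t : ℝ, (U r s).comp (U t r) = U t s)
    (a b c : ℝ) (x : E) : U b c (U a b x) = U a c x :=
  DFunLike.congr_fun (hcomp b c a) x

theorem evolution_injective (hid : ∀ t : ℝ, U t t = 1)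
    (hcomp : ∀ r s t : ℝ, (U r s).comp (U t r) = U t s) (s t₀ : ℝ) : Injective (U s t₀) := by
  intro x y h
  simpa [evolution_apply_apply hcomp, hid] using congrArg (U t₀ s) h

theorem hasDerivAt_evolution (hid : ∀ t : ℝ, U t t = 1)
    (hcomp : ∀ r s t : ℝ, (U r s).comp (U t r) = U t s) {z v : E} {t : ℝ}
    (hv : Tendsto (fun h : ℝ => (h : ℂ)⁻¹ • (U (t + h) t z - z)) (𝓝[≠] 0) (𝓝 v)) (t₀ : ℝ) :
    HasDerivAt (fun r => U r t₀ z) (U t t₀ v) t := by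
  have hderiv : HasDerivAt (fun r => U r t z) v t := by
    rw [hasDerivAt_iff_tendsto_slope_zero]
    convert hv using 2 with h
    rw [hid, one_apply_eq_self, ← Complex.coe_smul, Complex.ofReal_inv]
  simpa [Function.comp_def, evolution_apply_apply hcomp] using
    ((U t t₀).restrictScalars ℝ).hasFDerivAt.comp_hasDerivAt t hderiv

theorem apply_intervalIntegral_smul_evolution [CompleteSpace E]
    (hcomp : ∀ r s t : ℝ, (U r s).comp (U t r) = U t s) {K : ℝ → ℂ} (hK : Continuous K)
    {z : E} {p : ℝ} (hz : Continuous fun r => U r p z) (q s t : ℝ) :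
    U p q (∫ r in s..t, K r • U r p z) = ∫ r in s..t, K r • U r q z := by
  rw [← (U p q).intervalIntegral_comp_comm
    ((hK.smul hz).intervalIntegrable (u := fun r => K r • U r p z) s t)]
  simp only [map_smul, evolution_apply_apply hcomp]

end EvolutionFamily

theorem inner_intervalIntegral (a : H) {f : ℝ → H} {s t : ℝ}
    (hf : IntervalIntegrable f volume s t) :
    ⟪a, ∫ r in s..t, f r⟫_ℂ = ∫ r in s..t, ⟪a, f r⟫_ℂ :=
  ((innerSL ℂ a).intervalIntegral_comp_comm hf).symm

theorem neg_inner_sub_intervalIntegral_div (a w : H) {K : ℝ → ℂ} {v : ℝ → H}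
    (hK : Continuous K) (hv : Continuous v) (c : ℂ) (s t : ℝ) :
    -(⟪a, w - ∫ r in s..t, K r • v r⟫_ℂ / c)
      = -(⟪a, w⟫_ℂ / c) + ∫ r in s..t, K r * (⟪a, v r⟫_ℂ / c) := by
  rw [inner_sub_right, inner_intervalIntegral a
    ((hK.smul hv).intervalIntegrable (u := fun r => K r • v r) s t)]
  simp_rw [inner_smul_right, mul_div_assoc', intervalIntegral.integral_div]
  ring

/-- The noise `η_{ts}` determined by the memory kernel `K = K(t,·)`. -/
def nsNoise (U : ℝ → ℝ → H →L[ℂ] H) (t₀ : ℝ) (z : H) (Lz : ℝ → H) (K : ℝ → ℂ) (t s : ℝ) : H :=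
  U t s (nsQ U t₀ z t (Lz t)) - ∫ r in s..t, K r • U r s z

theorem exists_continuous_memoryKernel {E : Type} [NormedAddCommGroup E] [InnerProductSpace ℂ E]
    {U : ℝ → ℝ → E →L[ℂ] E} {t₀ : ℝ} {z : E} {Lz : ℝ → E} (hid : ∀ t : ℝ, U t t = 1)
    (hcomp : ∀ r s t : ℝ, (U r s).comp (U t r) = U t s) (hUz : Continuous fun s => U s t₀ z)
    (hz0 : z ≠ 0) (hLzc : Continuous fun t => U t t₀ (Lz t)) (t : ℝ) :
    ∃ K : ℝ → ℂ, Continuous K ∧ ∀ s, K s =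
      -(⟪U s t₀ (nsQ U t₀ z s (Lz s)), U s t₀ (U t s (nsQ U t₀ z t (Lz t)))⟫_ℂ
          / ⟪U s t₀ z, U s t₀ z⟫_ℂ)
        + ∫ r in s..t, K r *
            (⟪U s t₀ (nsQ U t₀ z s (Lz s)), U s t₀ (U r s z)⟫_ℂ / ⟪U s t₀ z, U s t₀ z⟫_ℂ) := by
  have hc : ∀ s, ⟪U s t₀ z, U s t₀ z⟫_ℂ ≠ 0 := fun s =>
    inner_self_ne_zero.mpr ((map_ne_zero_iff _ (evolution_injective hid hcomp s t₀)).mpr hz0)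
  have hQ : Continuous fun s => U s t₀ (nsQ U t₀ z s (Lz s)) := by
    simp only [nsQ, nsP, map_sub, map_smul]
    exact hLzc.sub (((hUz.inner hLzc).div (hUz.inner hUz) hc).smul hUz)
  obtain ⟨K, hK, hKeq⟩ := exists_continuous_eq_volterraMap (t := t)
    (g := fun s => -(⟪U s t₀ (nsQ U t₀ z s (Lz s)), U t t₀ (nsQ U t₀ z t (Lz t))⟫_ℂ
      / ⟪U s t₀ z, U s t₀ z⟫_ℂ))
    (k := fun r s => ⟪U s t₀ (nsQ U t₀ z s (Lz s)), U r t₀ z⟫_ℂ / ⟪U s t₀ z, U s t₀ z⟫_ℂ)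
    ((hQ.inner continuous_const).div (hUz.inner hUz) hc).neg
    (((hQ.comp continuous_snd).inner (hUz.comp continuous_fst)).div
      ((hUz.inner hUz).comp continuous_snd) fun p => hc p.2)
  refine ⟨K, hK, fun s => ?_⟩
  simpa only [evolution_apply_apply hcomp, volterraMap] using hKeq s

section NonstationaryGLE

variable {U : ℝ → ℝ → H →L[ℂ] H} {t₀ : ℝ} {z : H} {Lz : ℝ → H}

theorem hasDerivAt_gle_iff_eq_nsNoise (hid : ∀ t : ℝ, U t t = 1)
    (hcomp : ∀ r s t : ℝ, (U r s).comp (U t r) = U t s) (hUz : ∀ p, Continuous fun r => U r p z)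
    {t : ℝ} (hderiv : HasDerivAt (fun r => U r t₀ z) (U t t₀ (Lz t)) t) {K : ℝ → ℂ}
    (hK : Continuous K) (η : H) (s : ℝ) :
    HasDerivAt (fun r => U r t₀ z)
        (U t t₀ (nsP U t₀ z t (Lz t)) + U s t₀ η + ∫ r in s..t, K r • U r t₀ z) t ↔
      η = nsNoise U t₀ z Lz K t s := by
  have hnoise : U s t₀ (nsNoise U t₀ z Lz K t s)
      = U t t₀ (nsQ U t₀ z t (Lz t)) - ∫ r in s..t, K r • U r t₀ z := by
    rw [nsNoise, map_sub, evolution_apply_apply hcomp,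
      apply_intervalIntegral_smul_evolution hcomp hK (hUz s)]
  have hsplit : U t t₀ (Lz t) = U t t₀ (nsP U t₀ z t (Lz t)) + U t t₀ (nsQ U t₀ z t (Lz t)) := by
    rw [← map_add, nsQ, add_sub_cancel]
  have hdiff : U t t₀ (nsP U t₀ z t (Lz t)) + U s t₀ η + (∫ r in s..t, K r • U r t₀ z)
        - U t t₀ (Lz t) = U s t₀ η - U s t₀ (nsNoise U t₀ z Lz K t s) := by
    rw [hnoise, hsplit]
    abel
  rw [← (evolution_injective hid hcomp s t₀).eq_iff, ← sub_eq_zero (a := U s t₀ η), ← hdiff,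
    sub_eq_zero]
  exact ⟨fun h => h.unique hderiv, fun h => h ▸ hderiv⟩

theorem neg_inner_nsNoise_div_eq (hid : ∀ t : ℝ, U t t = 1)
    (hUz : ∀ p, Continuous fun r => U r p z) {K : ℝ → ℝ → ℂ} {t : ℝ} (hK : Continuous (K t))
    (s : ℝ) :
    -(⟪U s t₀ (nsNoise U t₀ z Lz (K s) s s), U s t₀ (nsNoise U t₀ z Lz (K t) t s)⟫_ℂ
        / ⟪U s t₀ z, U s t₀ z⟫_ℂ)
      = -(⟪U s t₀ (nsQ U t₀ z s (Lz s)), U s t₀ (U t s (nsQ U t₀ z t (Lz t)))⟫_ℂ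
            / ⟪U s t₀ z, U s t₀ z⟫_ℂ)
          + ∫ r in s..t, K t r *
              (⟪U s t₀ (nsQ U t₀ z s (Lz s)), U s t₀ (U r s z)⟫_ℂ
                / ⟪U s t₀ z, U s t₀ z⟫_ℂ) := by
  have hUsz : Continuous fun r => U s t₀ (U r s z) := (U s t₀).continuous.comp (hUz s)
  rw [nsNoise, nsNoise, intervalIntegral.integral_same, sub_zero, hid,
    one_apply_eq_self, map_sub, ← (U s t₀).intervalIntegral_comp_comm
      ((hK.smul (hUz s)).intervalIntegrable (u := fun r => K t r • U r s z) s t)]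
  simp_rw [map_smul]
  exact neg_inner_sub_intervalIntegral_div _ _ hK hUsz _ s t

end NonstationaryGLE

/-- existence and uniqueness for the non-stationary GLE with the
non-stationary 2FDT, for a two-parameter evolution family with reversed composition
law; K(t,·) is the unique continuous solution of a linear Volterra equation and η is
given by the explicit formula. -/
theorem nonstationary_gle_uniqueness
    (U : ℝ → ℝ → H →L[ℂ] H)
    (hid : ∀ t : ℝ, U t t = 1)
    (hcomp : ∀ r s t : ℝ, (U r s).comp (U t r) = U t s)
    (hcont : ∀ x : H, Continuous fun p : ℝ × ℝ => U p.1 p.2 x)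
    (t₀ : ℝ) (z : H) (hz0 : z ≠ 0)
    (Lz : ℝ → H)
    (hLz : ∀ t : ℝ, Tendsto (fun h : ℝ => (h : ℂ)⁻¹ • (U (t + h) t z - z))
      (𝓝[≠] 0) (𝓝 (Lz t)))
    (hLzc : Continuous fun t => U t t₀ (Lz t)) :
    (∃ (K : ℝ → ℝ → ℂ) (η : ℝ → ℝ → H),
      (∀ t : ℝ, Continuous (K t)) ∧
      (∀ t s : ℝ, HasDerivAt (fun r => U r t₀ z)
        (U t t₀ (nsP U t₀ z t (Lz t)) + U s t₀ (η t s)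
          + ∫ r in s..t, K t r • U r t₀ z) t) ∧
      (∀ t s : ℝ, K t s =
        -(⟪U s t₀ (η s s), U s t₀ (η t s)⟫_ℂ / ⟪U s t₀ z, U s t₀ z⟫_ℂ))) ∧
    (∀ (K : ℝ → ℝ → ℂ) (η : ℝ → ℝ → H),
      (∀ t : ℝ, Continuous (K t)) →
      (∀ t s : ℝ, HasDerivAt (fun r => U r t₀ z)
        (U t t₀ (nsP U t₀ z t (Lz t)) + U s t₀ (η t s)
          + ∫ r in s..t, K t r • U r t₀ z) t) →
      (∀ t s : ℝ, K t s =
        -(⟪U s t₀ (η s s), U s t₀ (η t s)⟫_ℂ / ⟪U s t₀ z, U s t₀ z⟫_ℂ)) →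
      (∀ t s : ℝ, K t s =
        -(⟪U s t₀ (nsQ U t₀ z s (Lz s)), U s t₀ (U t s (nsQ U t₀ z t (Lz t)))⟫_ℂ
            / ⟪U s t₀ z, U s t₀ z⟫_ℂ)
          + ∫ r in s..t, K t r *
              (⟪U s t₀ (nsQ U t₀ z s (Lz s)), U s t₀ (U r s z)⟫_ℂ
                / ⟪U s t₀ z, U s t₀ z⟫_ℂ)) ∧
      (∀ t s : ℝ,
        η t s = U t s (nsQ U t₀ z t (Lz t)) - ∫ r in s..t, K t r • U r s z)) := by
  have hUz : ∀ p, Continuous fun r => U r p z :=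
    fun p => (hcont z).comp (continuous_id.prodMk continuous_const)
  have hderiv : ∀ t, HasDerivAt (fun r => U r t₀ z) (U t t₀ (Lz t)) t :=
    fun t => hasDerivAt_evolution hid hcomp (hLz t) t₀
  refine ⟨?_, fun K η hK hGLE hFDT => ?_⟩
  · choose K hK hKeq using exists_continuous_memoryKernel hid hcomp (hUz t₀) hz0 hLzc
    refine ⟨K, fun t s => nsNoise U t₀ z Lz (K t) t s, hK,
      fun t s => (hasDerivAt_gle_iff_eq_nsNoise hid hcomp hUz (hderiv t) (hK t) _ s).mpr rfl,
      fun t s => ?_⟩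
    rw [neg_inner_nsNoise_div_eq hid hUz (hK t)]
    exact hKeq t s
  · have hη : ∀ t s, η t s = nsNoise U t₀ z Lz (K t) t s :=
      fun t s => (hasDerivAt_gle_iff_eq_nsNoise hid hcomp hUz (hderiv t) (hK t) _ s).mp
        (hGLE t s)
    refine ⟨fun t s => ?_, hη⟩
    rw [hFDT t s, hη s s, hη t s]
    exact neg_inner_nsNoise_div_eq hid hUz (hK t) s

end
end
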